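/- arXiv:2012.01408 — 3 statements merged into one kernel-verified Lean document; each statement's English description precedes it below -/
import Mathlib

section
/- Let R be a commutative ring, let x, y ∈ SL₂(R), let ε ∈ {1, −1}, and set y₁ = x²·y·x^{2ε}·y⁻¹. Then for every integer k ∈ ℤ, tr(x² · y₁^{k−1}) = tr(x⁻² · y₁^{k}), where tr denotes the trace of the underlying 2×2 matrix. -/
/-!
With `A = x²` and `B = y x^{2ε} y⁻¹` we have `y₁ = AB` and `x⁻² y₁^k = B (AB)^{k-1}`, and
`tr A = tr B` because conjugation and inversion preserve traces in `SL₂`.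
Cayley–Hamilton in `SL₂` reads `g⁻¹ = (tr g)·1 - g`, so `tr (g⁻¹h) + tr (gh) = tr g · tr h`.
Applied to `g = A` and `g = B` with `h = (AB)^{m+1}` it shows that
`tr (A (AB)^m) - tr (B (AB)^m)` does not depend on `m ∈ ℤ`; at `m = 0` it is `tr A - tr B = 0`.
-/

open scoped MatrixGroups

theorem Matrix.adjugate_fin_two_eq_trace_smul_sub {α : Type*} [CommRing α]
    (A : Matrix (Fin 2) (Fin 2) α) : adjugate A = trace A • 1 - A := by
  ext i j
  fin_cases i <;> fin_cases j <;> simp [adjugate_fin_two, trace_fin_two]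

namespace Matrix.SpecialLinearGroup

variable {R : Type*} [CommRing R]

local notation:max "tr " g:max => Matrix.trace ((g : SL(2, R)) : Matrix (Fin 2) (Fin 2) R)

theorem coe_inv_eq_trace_smul_sub (g : SL(2, R)) :
    ((g⁻¹ : SL(2, R)) : Matrix (Fin 2) (Fin 2) R) = tr g • 1 - g := by
  rw [coe_inv, adjugate_fin_two_eq_trace_smul_sub]

theorem trace_inv_mul_add_trace_mul (g h : SL(2, R)) :
    tr (g⁻¹ * h) + tr (g * h) = tr g * tr h := by
  rw [coe_mul, coe_mul, coe_inv_eq_trace_smul_sub, sub_mul, smul_mul, one_mul, trace_sub,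
    trace_smul, smul_eq_mul, sub_add_cancel]

theorem trace_inv (g : SL(2, R)) : tr g⁻¹ = tr g := by
  rw [coe_inv_eq_trace_smul_sub, trace_sub, trace_smul, trace_one, Fintype.card_fin, smul_eq_mul]
  ring

theorem trace_mul_comm (g h : SL(2, R)) : tr (g * h) = tr (h * g) := by
  rw [coe_mul, coe_mul, Matrix.trace_mul_comm]

theorem trace_conj (g h : SL(2, R)) : tr (h * g * h⁻¹) = tr g := by
  rw [trace_mul_comm, inv_mul_cancel_left]

theorem trace_mul_zpow_mul_eq_of_trace_eq {A B : SL(2, R)} (hAB : tr A = tr B) (m : ℤ) :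
    tr (A * (A * B) ^ m) = tr (B * (A * B) ^ m) := by
  have periodic :
      Function.Periodic (fun m : ℤ ↦ tr (A * (A * B) ^ m) - tr (B * (A * B) ^ m)) 1 := by
    intro m
    have hA : A⁻¹ * (A * B) ^ (m + 1) = B * (A * B) ^ m := by
      rw [add_comm, _root_.zpow_one_add, mul_assoc, inv_mul_cancel_left]
    have hB : (A * B) ^ (m + 1) * B⁻¹ = (A * B) ^ m * A := by
      rw [_root_.zpow_add_one, mul_assoc, mul_inv_cancel_right]
    have eA := trace_inv_mul_add_trace_mul A ((A * B) ^ (m + 1))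
    have eB := trace_inv_mul_add_trace_mul B ((A * B) ^ (m + 1))
    rw [hA] at eA
    rw [trace_mul_comm B⁻¹, hB, trace_mul_comm _ A] at eB
    dsimp only
    linear_combination eA - eB + tr ((A * B) ^ (m + 1)) * hAB
  simpa [sub_eq_zero, hAB] using periodic.int_mul_eq m

end Matrix.SpecialLinearGroup

open Matrix.SpecialLinearGroup

/-- Lemma 2.1: for `x, y ∈ SL₂(R)`, `ε = ±1` and `y₁ = x²·y·x^{2ε}·y⁻¹`, one has
`tr(x² · y₁^{k-1}) = tr(x⁻² · y₁^k)` for every integer `k`. -/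
theorem trace_sq_mul_zpow_sub_one_eq_trace_inv_sq_mul_zpow
    (R : Type*) [CommRing R] (x y : Matrix.SpecialLinearGroup (Fin 2) R)
    (ε : ℤ) (hε : ε = 1 ∨ ε = -1) (k : ℤ) :
    Matrix.trace
      ((x ^ 2 * (x ^ 2 * y * x ^ (2 * ε) * y⁻¹) ^ (k - 1) :
        Matrix.SpecialLinearGroup (Fin 2) R) : Matrix (Fin 2) (Fin 2) R)
    = Matrix.trace
      ((x ^ (-2 : ℤ) * (x ^ 2 * y * x ^ (2 * ε) * y⁻¹) ^ k :
        Matrix.SpecialLinearGroup (Fin 2) R) : Matrix (Fin 2) (Fin 2) R) := by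
  set B := y * x ^ (2 * ε) * y⁻¹
  have hy₁ : x ^ 2 * y * x ^ (2 * ε) * y⁻¹ = x ^ 2 * B := by simp only [B, mul_assoc]
  have htr : Matrix.trace ((x ^ 2 : SL(2, R)) : Matrix (Fin 2) (Fin 2) R) =
      Matrix.trace (B : Matrix (Fin 2) (Fin 2) R) := by
    rw [trace_conj]
    rcases hε with rfl | rfl
    · rw [mul_one, zpow_ofNat]
    · rw [mul_neg_one, zpow_neg, trace_inv, zpow_ofNat]
  have hshift : x ^ (-2 : ℤ) * (x ^ 2 * B) ^ k = B * (x ^ 2 * B) ^ (k - 1) := by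
    have hsplit : (x ^ 2 * B) ^ k = x ^ 2 * B * (x ^ 2 * B) ^ (k - 1) := by
      rw [← _root_.zpow_one_add, add_sub_cancel]
    rw [hsplit, zpow_neg, zpow_ofNat, mul_assoc, inv_mul_cancel_left]
  rw [hy₁, hshift]
  exact trace_mul_zpow_mul_eq_of_trace_eq htr (k - 1)
end

section
/- Let k ≥ 1 be an integer and let A ∈ SL₂(ℂ). Then Σ_{i=1}^{k} (−1)^{k−i} tr(A^{i}) + (−1)^{k} = Π_{j=1}^{k} ( tr(A) + ζ^{j} + ζ^{−j} ), where ζ = e^{2πi/(2k+1)} is a primitive (2k+1)-th root of unity in ℂ. -/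
/-!
Write `tr A = a + b` with `a * b = 1` (the eigenvalues of `A`); the Cayley–Hamilton
recurrence gives `tr (A ^ i) = a ^ i + b ^ i`. After multiplying by `a ^ k`, the left side
becomes the geometric sum `∑_{j ≤ 2k} (-a) ^ j`, while each factor of the right side splits as
`(tr A + ζ^j + ζ^{-j}) * a = (a + ζ^j) (a + ζ^{2k+1-j})`, so the right side becomes
`∏_{j=1}^{2k} (a + ζ^j)`, which equals the same geometric sum because the `ζ^j`,
`1 ≤ j ≤ 2k`, are the roots of `1 + X + ⋯ + X^{2k}`.
-/

open Finset Polynomial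

theorem Matrix.trace_pow_eq_add_pow_of_fin_two {R : Type*} [CommRing R] [Nontrivial R]
    (M : Matrix (Fin 2) (Fin 2) R) {a b : R} (hsum : a + b = M.trace) (hprod : a * b = M.det)
    (n : ℕ) : (M ^ n).trace = a ^ n + b ^ n := by
  have hCH : M ^ 2 = M.trace • M - M.det • 1 := by
    have := M.aeval_self_charpoly
    rw [charpoly_fin_two] at this
    simp only [map_add, map_sub, map_mul, map_pow, aeval_X, aeval_C,
      Algebra.algebraMap_eq_smul_one, smul_mul_assoc, one_mul] at this
    rw [← sub_eq_zero, ← this]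
    abel
  induction n using Nat.twoStepInduction with
  | zero => norm_num
  | one => simpa using hsum.symm
  | more n ih₀ ih₁ =>
    calc (M ^ (n + 2)).trace = M.trace * (M ^ (n + 1)).trace - M.det * (M ^ n).trace := by
          rw [pow_add, hCH, Matrix.mul_sub, Matrix.mul_smul, Matrix.mul_smul, Matrix.mul_one,
            trace_sub, trace_smul, trace_smul, pow_succ, smul_eq_mul, smul_eq_mul]
      _ = a ^ (n + 2) + b ^ (n + 2) := by rw [ih₀, ih₁, ← hsum, ← hprod]; ring

theorem alternating_sum_add_pow_mul_pow {R : Type*} [CommRing R] {a b : R} (hab : a * b = 1)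
    (k : ℕ) :
    (∑ i ∈ Icc 1 k, (-1) ^ (k - i) * (a ^ i + b ^ i) + (-1) ^ k) * a ^ k =
      ∑ j ∈ range (2 * k + 1), (-a) ^ j := by
  induction k with
  | zero => simp
  | succ k ih =>
    have hrec : ∑ i ∈ Icc 1 (k + 1), (-1) ^ (k + 1 - i) * (a ^ i + b ^ i) + (-1) ^ (k + 1) =
        a ^ (k + 1) + b ^ (k + 1) -
          (∑ i ∈ Icc 1 k, (-1) ^ (k - i) * (a ^ i + b ^ i) + (-1) ^ k) := by
      have hshift : ∑ i ∈ Icc 1 k, (-1 : R) ^ (k + 1 - i) * (a ^ i + b ^ i) =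
          -∑ i ∈ Icc 1 k, (-1) ^ (k - i) * (a ^ i + b ^ i) := by
        rw [← sum_neg_distrib]
        refine sum_congr rfl fun i hi => ?_
        rw [show k + 1 - i = k - i + 1 by grind, pow_succ]
        ring
      rw [sum_Icc_succ_top (by omega), hshift, Nat.sub_self]
      ring
    have habk : a ^ (k + 1) * b ^ (k + 1) = 1 := by rw [← mul_pow, hab, one_pow]
    have hgeom := geom_sum_mul (-a) (2 * k + 1)
    have heven : (-a) ^ (2 * k + 1 + 1) = a ^ (2 * k + 1 + 1) := Even.neg_pow ⟨k + 1, by ring⟩ a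
    rw [hrec, show 2 * (k + 1) + 1 = 2 * k + 1 + 1 + 1 by ring, sum_range_succ, sum_range_succ]
    linear_combination habk - a * ih + hgeom - heven

theorem IsPrimitiveRoot.prod_range_sub_pow_succ {R : Type*} [CommRing R] [IsDomain R] {ζ : R}
    {n : ℕ} (hζ : IsPrimitiveRoot ζ (n + 1)) (x : R) :
    ∏ j ∈ range n, (x - ζ ^ (j + 1)) = ∑ j ∈ range (n + 1), x ^ j := by
  have := X_pow_sub_C_eq_prod hζ n.succ_pos (one_pow (n + 1))
  rw [C_1, ← mul_geom_sum, prod_range_succ', pow_zero, mul_one, mul_comm, eq_comm] at this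
  replace this := mul_right_cancel₀ (X_sub_C_ne_zero 1) this
  simpa [eval_prod, eval_geom_sum] using congrArg (eval x) this

theorem Finset.prod_range_add_self {M : Type*} [CommMonoid M] (f : ℕ → M) (k : ℕ) :
    ∏ j ∈ range (k + k), f j = ∏ j ∈ range k, f j * f (k + (k - 1 - j)) := by
  rw [prod_range_add, prod_mul_distrib, prod_range_reflect (fun j => f (k + j))]

theorem Finset.prod_range_succ_eq_prod_Icc {M : Type*} [CommMonoid M] (f : ℕ → M) (n : ℕ) :
    ∏ j ∈ range n, f (j + 1) = ∏ j ∈ Icc 1 n, f j := by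
  rw [range_eq_Ico, prod_Ico_add' f 0 n 1, zero_add, Ico_add_one_right_eq_Icc]

theorem IsPrimitiveRoot.prod_add_add_pow_add_inv_mul_pow {K : Type*} [Field K] {ζ : K} {k : ℕ}
    (hζ : IsPrimitiveRoot ζ (2 * k + 1)) {a b : K} (hab : a * b = 1) :
    (∏ j ∈ range k, (a + b + ζ ^ (j + 1) + (ζ ^ (j + 1))⁻¹)) * a ^ k =
      ∑ j ∈ range (2 * k + 1), (-a) ^ j := by
  have hpair : ∀ j ∈ range k, (a + b + ζ ^ (j + 1) + (ζ ^ (j + 1))⁻¹) * a =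
      (a + ζ ^ (j + 1)) * (a + ζ ^ (k + (k - 1 - j) + 1)) := by
    intro j hj
    have hinv : ζ ^ (k + (k - 1 - j) + 1) = (ζ ^ (j + 1))⁻¹ := by
      refine eq_inv_of_mul_eq_one_left ?_
      rw [← pow_add, show k + (k - 1 - j) + 1 + (j + 1) = 2 * k + 1 by grind, hζ.pow_eq_one]
    rw [hinv]
    linear_combination hab - mul_inv_cancel₀ (pow_ne_zero (j + 1) (hζ.ne_zero (by omega)))
  calc (∏ j ∈ range k, (a + b + ζ ^ (j + 1) + (ζ ^ (j + 1))⁻¹)) * a ^ k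
      = ∏ j ∈ range (k + k), (a + ζ ^ (j + 1)) := by
        rw [prod_range_add_self, ← prod_congr rfl hpair, prod_mul_distrib, prod_const,
          card_range]
    _ = ∏ j ∈ range (2 * k), (-a - ζ ^ (j + 1)) := by
        simp_rw [← neg_add', prod_neg, card_range, ← two_mul,
          Even.neg_one_pow ⟨k, two_mul k⟩, one_mul]
    _ = ∑ j ∈ range (2 * k + 1), (-a) ^ j := hζ.prod_range_sub_pow_succ (-a)

theorem sum_trace_pow_eq_prod_trace_add_root_of_unity_general
    (k : ℕ) (A : Matrix.SpecialLinearGroup (Fin 2) ℂ) :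
    (∑ i ∈ Finset.Icc 1 k, (-1 : ℂ) ^ (k - i) *
        Matrix.trace ((A ^ i : Matrix.SpecialLinearGroup (Fin 2) ℂ) : Matrix (Fin 2) (Fin 2) ℂ)
      + (-1 : ℂ) ^ k)
    = ∏ j ∈ Finset.Icc 1 k,
        (Matrix.trace ((A : Matrix (Fin 2) (Fin 2) ℂ))
          + Complex.exp (2 * Real.pi * Complex.I / (2 * k + 1)) ^ (j : ℤ)
          + Complex.exp (2 * Real.pi * Complex.I / (2 * k + 1)) ^ (-(j : ℤ))) := by
  have hζ :
      IsPrimitiveRoot (Complex.exp (2 * Real.pi * Complex.I / (2 * k + 1))) (2 * k + 1) := by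
    simpa using Complex.isPrimitiveRoot_exp (2 * k + 1) (by omega)
  obtain ⟨a, b, hsum, hprod⟩ :
      ∃ a b : ℂ, a + b = (A : Matrix (Fin 2) (Fin 2) ℂ).trace ∧ a * b = 1 := by
    set t := (A : Matrix (Fin 2) (Fin 2) ℂ).trace
    obtain ⟨s, hs⟩ := IsAlgClosed.exists_eq_mul_self (t ^ 2 - 4)
    exact ⟨(t + s) / 2, (t - s) / 2, by ring, by linear_combination hs / 4⟩
  simp only [Matrix.SpecialLinearGroup.coe_pow,
    Matrix.trace_pow_eq_add_pow_of_fin_two _ hsum (hprod.trans A.det_coe.symm), zpow_neg,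
    zpow_natCast, ← hsum, ← prod_range_succ_eq_prod_Icc]
  refine mul_right_cancel₀ (pow_ne_zero k (left_ne_zero_of_mul_eq_one hprod)) ?_
  rw [alternating_sum_add_pow_mul_pow hprod, hζ.prod_add_add_pow_add_inv_mul_pow hprod]

/-- Cyclotomic factorization (Jambor–Liebeck–O'Brien, Lemma 2.1): for `A ∈ SL₂(ℂ)`,
`k ≥ 1` and `ζ = e^{2πi/(2k+1)}`,
`∑_{i=1}^{k} (-1)^{k-i} tr(A^i) + (-1)^k = ∏_{j=1}^{k} (tr(A) + ζ^j + ζ^{-j})`. -/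
theorem sum_trace_pow_eq_prod_trace_add_root_of_unity
    (k : ℕ) (hk : 1 ≤ k) (A : Matrix.SpecialLinearGroup (Fin 2) ℂ) :
    (∑ i ∈ Finset.Icc 1 k, (-1 : ℂ) ^ (k - i) *
        Matrix.trace ((A ^ i : Matrix.SpecialLinearGroup (Fin 2) ℂ) : Matrix (Fin 2) (Fin 2) ℂ)
      + (-1 : ℂ) ^ k)
    = ∏ j ∈ Finset.Icc 1 k,
        (Matrix.trace ((A : Matrix (Fin 2) (Fin 2) ℂ))
          + Complex.exp (2 * Real.pi * Complex.I / (2 * k + 1)) ^ (j : ℤ)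
          + Complex.exp (2 * Real.pi * Complex.I / (2 * k + 1)) ^ (-(j : ℤ))) :=
  sum_trace_pow_eq_prod_trace_add_root_of_unity_general k A
end

section
/- Let k ≥ 1 be an integer and let p be a prime coprime to 2k+1 such that p² ≢ 1 (mod q) for every prime q dividing 2k+1 (equivalently, p² ≢ 1 (mod d) for every divisor d > 1 of 2k+1). Then for any primitive (2k+1)-th root of unity ζ in an algebraic closure of 𝔽_p and every 1 ≤ i ≤ k, the element ζ^{i} + ζ^{−i} does not lie in (the image of) the prime field 𝔽_p. -/
/-!
If `c = μ + μ⁻¹` with `μ = ζ ^ i` lies in `𝔽_p`, it is fixed by Frobenius, so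
`μ ^ p + (μ ^ p)⁻¹ = μ + μ⁻¹` and hence `μ ^ p = μ ^ (±1)`; either way `μ ^ (p ^ 2) = μ`. The
order of `μ` therefore divides both `2k + 1` and `p ^ 2 - 1`, and it is not `1` because
`0 < i < 2k + 1`; any prime factor of it contradicts the hypothesis on `p`.
-/

theorem eq_or_eq_inv_of_add_inv_eq_add_inv {K : Type*} [Field K] {a b : K} (ha : a ≠ 0)
    (hb : b ≠ 0) (h : a + a⁻¹ = b + b⁻¹) : a = b ∨ a = b⁻¹ := by
  have : (a - b) * (a * b - 1) = 0 := by
    field_simp at h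
    linear_combination h
  rcases mul_eq_zero.mp this with h | h
  · exact .inl (sub_eq_zero.mp h)
  · exact .inr (eq_inv_of_mul_eq_one_left (sub_eq_zero.mp h))

theorem pow_sq_eq_self_of_add_inv_pow_expChar_eq {K : Type*} [Field K] (p : ℕ) [ExpChar K p]
    {μ : K} (h : (μ + μ⁻¹) ^ p = μ + μ⁻¹) : μ ^ p ^ 2 = μ := by
  rcases eq_or_ne μ 0 with rfl | hμ
  · simp [(expChar_pos K p).ne']
  rw [add_pow_expChar, inv_pow] at h
  rw [sq, pow_mul]
  rcases eq_or_eq_inv_of_add_inv_eq_add_inv (pow_ne_zero p hμ) hμ h with h | h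
  · rw [h, h]
  · rw [h, inv_pow, h, inv_inv]

theorem zeta_pow_add_zeta_pow_neg_not_in_prime_field_general
    (k : ℕ)
    (p : ℕ) [Fact p.Prime]
    (hq : ∀ q : ℕ, q.Prime → q ∣ 2 * k + 1 → ¬ (p ^ 2 ≡ 1 [MOD q]))
    (ζ : AlgebraicClosure (ZMod p))
    (hζ : IsPrimitiveRoot ζ (2 * k + 1)) :
    ∀ i ∈ Finset.Icc 1 k, ∀ c : ZMod p,
      algebraMap (ZMod p) (AlgebraicClosure (ZMod p)) c ≠ ζ ^ (i : ℤ) + ζ ^ (-(i : ℤ)) := by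
  intro i hi c hc
  obtain ⟨hi1, hik⟩ := Finset.mem_Icc.mp hi
  rw [zpow_neg, zpow_natCast] at hc
  have hfix : (ζ ^ i + (ζ ^ i)⁻¹) ^ p = ζ ^ i + (ζ ^ i)⁻¹ := by
    rw [← hc, ← map_pow, ZMod.pow_card]
  have hsq : (ζ ^ i) ^ p ^ 2 = (ζ ^ i) ^ 1 := by
    rw [pow_one, pow_sq_eq_self_of_add_inv_pow_expChar_eq p hfix]
  have hmod : p ^ 2 ≡ 1 [MOD orderOf (ζ ^ i)] :=
    (hζ.isOfFinOrder (by omega)).pow.pow_eq_pow_iff_modEq.mp hsq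
  have horder_dvd : orderOf (ζ ^ i) ∣ 2 * k + 1 :=
    orderOf_dvd_of_pow_eq_one (by rw [pow_right_comm, hζ.pow_eq_one, one_pow])
  have horder_ne_one : orderOf (ζ ^ i) ≠ 1 :=
    orderOf_eq_one_iff.not.mpr (hζ.pow_ne_one_of_pos_of_lt (by omega) (by omega))
  obtain ⟨q, hq_prime, hq_dvd⟩ := Nat.exists_prime_and_dvd horder_ne_one
  exact hq q hq_prime (hq_dvd.trans horder_dvd) (hmod.of_dvd hq_dvd)

/-- Main step in the proof of Proposition 3.2, in finite-field form: if `p` is a prime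
coprime to `2k+1` with `p² ≢ 1 (mod q)` for every prime `q ∣ 2k+1`, then for any primitive
`(2k+1)`-th root of unity `ζ` in an algebraic closure of `𝔽_p`, the elements `ζⁱ + ζ⁻ⁱ`
(for `1 ≤ i ≤ k`) do not lie in the prime field `𝔽_p`. -/
theorem zeta_pow_add_zeta_pow_neg_not_in_prime_field
    (k : ℕ) (hk : 1 ≤ k)
    (p : ℕ) [Fact p.Prime] (hcop : Nat.Coprime p (2 * k + 1))
    (hq : ∀ q : ℕ, q.Prime → q ∣ 2 * k + 1 → ¬ (p ^ 2 ≡ 1 [MOD q]))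
    (ζ : AlgebraicClosure (ZMod p))
    (hζ : IsPrimitiveRoot ζ (2 * k + 1)) :
    ∀ i ∈ Finset.Icc 1 k, ∀ c : ZMod p,
      algebraMap (ZMod p) (AlgebraicClosure (ZMod p)) c ≠ ζ ^ (i : ℤ) + ζ ^ (-(i : ℤ)) :=
  zeta_pow_add_zeta_pow_neg_not_in_prime_field_general k p hq ζ hζ
end
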